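/- Let A > 1 be an integer and c_A = 2A²/(A² − 1). Then π_A(N) ~ c_A · A^N / N as N → ∞ along even integers; that is, the ratio π_A(N) / (c_A A^N / N) tends to 1 as N → ∞ through even N. -/

import Mathlib

open Filter

namespace Winding

/-- Words of length `n` over the alphabet `{1,…,A}`; the `i`-th letter is `(α i).1 + 1`. -/
abbrev Word (A n : ℕ) : Type := Fin n → Fin A

/-- The `i`-th partial quotient `a_{i+1} ∈ {1,…,A}` of a word. -/
def letter {A n : ℕ} (α : Word A n) (i : Fin n) : ℕ := (α i).1 + 1

/-- `α` has period `d`: `d` is a positive divisor of `n` and `a_i = a_{i+d}` whenever in range. -/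
def HasPeriod {A n : ℕ} (α : Word A n) (d : ℕ) : Prop :=
  0 < d ∧ d ∣ n ∧
    ∀ (i : ℕ) (h : i + d < n),
      α ⟨i, Nat.lt_of_le_of_lt (Nat.le_add_right i d) h⟩ = α ⟨i + d, h⟩

/-- The minimal period of a word. -/
noncomputable def mp {A n : ℕ} (α : Word A n) : ℕ := sInf {d | HasPeriod α d}

/-- A word of even length `n` is primitive if `mp α = n`, or `n/2` is odd and `mp α = n/2`. -/
def Primitive {A n : ℕ} (α : Word A n) : Prop :=
  mp α = n ∨ (Odd (n / 2) ∧ mp α = n / 2)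

/-- Cyclic shift of a word by `s` positions. -/
def shift {A n : ℕ} (s : ℕ) (α : Word A n) : Word A n :=
  fun i => α ⟨(i.1 + s) % n, Nat.mod_lt _ i.pos⟩

/-- Even cyclic shift relation. -/
def ShiftRel (A n : ℕ) (α β : Word A n) : Prop :=
  ∃ s : ℕ, Even s ∧ β = shift s α

/-- Primitive words of length `n`. -/
def PrimWord (A n : ℕ) : Type := {α : Word A n // Primitive α}

instance {A n : ℕ} : Finite (PrimWord A n) := by unfold PrimWord; infer_instance

/-- `P_n`: equivalence classes of primitive words of length `n` under even cyclic shifts. -/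
def GeodClass (A n : ℕ) : Type :=
  Quot (fun α β : PrimWord A n => ShiftRel A n α.1 β.1)

instance {A n : ℕ} : Finite (GeodClass A n) :=
  Finite.of_surjective _ (Quot.mk_surjective)

instance (N : ℕ) : Finite {n : ℕ // n ≤ N ∧ Even n} :=
  Finite.of_injective (fun x => (⟨x.1, Nat.lt_succ_of_le x.2.1⟩ : Fin (N + 1)))
    fun x y h => Subtype.ext (by simpa using congrArg Fin.val h)

/-- `Π_A(N)`: the disjoint union of the `P_n` over even `n ≤ N`. -/
def Geod (A N : ℕ) : Type := Σ n : {n : ℕ // n ≤ N ∧ Even n}, GeodClass A n.1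

instance {A N : ℕ} : Finite (Geod A N) := by unfold Geod; infer_instance

/-- `π_A(N) = |Π_A(N)|`. -/
noncomputable def piA (A N : ℕ) : ℕ := Nat.card (Geod A N)

/-- The winding number `Ψ(α) = a_1 - a_2 + a_3 - ⋯ - a_n`. -/
def winding {A n : ℕ} (α : Word A n) : ℤ :=
  ∑ i : Fin n, (-1) ^ (i : ℕ) * (letter α i : ℤ)

/-- Winding number of a closed geodesic (well defined on classes since `Ψ` is invariant
under even cyclic shifts; here computed on a choice of representative). -/
noncomputable def windingG {A N : ℕ} (C : Geod A N) : ℤ := winding C.2.out.1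

/-- Period length `ℓ_p` of a closed geodesic. -/
def plenG {A N : ℕ} (C : Geod A N) : ℕ := C.1.1

/-- Word length `ℓ_w(α) = 2 ∑ a_i`. -/
def wlen {A n : ℕ} (α : Word A n) : ℕ := 2 * ∑ i : Fin n, letter α i

/-- Word length of a closed geodesic. -/
noncomputable def wlenG {A N : ℕ} (C : Geod A N) : ℕ := wlen C.2.out.1

/-- Value of a finite continued fraction `b_1 + 1/(b_2 + 1/(⋯ + 1/b_k))`. -/
noncomputable def cfVal : List ℕ → ℝ
  | [] => 0
  | b :: l => b + 1 / cfVal l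

/-- The block `l` repeated `m` times. -/
def repBlock (l : List ℕ) : ℕ → List ℕ
  | 0 => []
  | m + 1 => l ++ repBlock l m

/-- Value of the purely periodic continued fraction with repeating block `l`:
the limit of the values of the finite continued fractions obtained by repeating `l`. -/
noncomputable def periodicVal (l : List ℕ) : ℝ :=
  limUnder atTop fun m => cfVal (repBlock l m)

/-- The list of partial quotients of a word. -/
def toList {A n : ℕ} (α : Word A n) : List ℕ := List.ofFn (letter α)

/-- `T^j ᾱ`: the purely periodic continued fraction whose repeating block is the
cyclic shift of `α` by `j`. -/
noncomputable def Tpow {A n : ℕ} (α : Word A n) (j : ℕ) : ℝ :=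
  periodicVal (toList (shift j α))

/-- Geometric length `ℓ_g(α) = 2 ∑_{j=1}^n log (T^j ᾱ)`. -/
noncomputable def glen {A n : ℕ} (α : Word A n) : ℝ :=
  2 * ∑ j : Fin n, Real.log (Tpow α (j.1 + 1))

/-- Geometric length of a closed geodesic. -/
noncomputable def glenG {A N : ℕ} (C : Geod A N) : ℝ := glen C.2.out.1


/-! Even shifts `shift (2 * t)`, `t < m`, act freely on primitive words of length `2 * m`: an
even proper shift fixing `α` would be a multiple of `mp α`, and primitivity (`mp α = 2m`, or `m`
odd and `mp α = m`) forces `2m` to divide it. Hence `|P_{2m}| · m` is the number of primitive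
words, which lies between `A^{2m} - m A^m` (every other word has a period `d ≤ m`) and `A^{2m}`.
So `π_A(2k) = ∑_{m ≤ k} A^{2m}/m + O(k A^k)`, and for `x = A² > 1` the sum is asymptotic to
`x/(x-1) · x^k/k`: reversing the order of summation turns `k/x^k · ∑_{m ≤ k} x^m/m` into
`∑_{j<k} k/(k-j) · x^{-j}`, which tends to `∑_j x^{-j}` by dominated convergence. -/

section Periods

variable {A n : ℕ}

lemma shift_zero (α : Word A n) : shift 0 α = α := by
  funext i
  simp [shift, Nat.mod_eq_of_lt i.isLt]

lemma shift_shift (s t : ℕ) (α : Word A n) : shift s (shift t α) = shift (s + t) α := by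
  funext i
  simp only [shift, Nat.mod_add_mod, add_assoc]

lemma iterate_shift_one (s : ℕ) (α : Word A n) : (shift 1)^[s] α = shift s α := by
  induction s with
  | zero => exact (shift_zero α).symm
  | succ s ih => rw [Function.iterate_succ_apply', ih, shift_shift, add_comm]

lemma isPeriodicPt_shift_one_iff {d : ℕ} {α : Word A n} :
    Function.IsPeriodicPt (shift 1) d α ↔ shift d α = α := by
  rw [Function.IsPeriodicPt, Function.IsFixedPt, iterate_shift_one]

lemma isPeriodicPt_shift_one_length (α : Word A n) : Function.IsPeriodicPt (shift 1) n α := by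
  rw [isPeriodicPt_shift_one_iff]
  funext i
  simp [shift, Nat.mod_eq_of_lt i.isLt]

lemma HasPeriod.apply_eq_apply_mod {α : Word A n} {d : ℕ} (hp : HasPeriod α d) (i : Fin n) :
    α i = α ⟨i % d, (Nat.mod_le _ _).trans_lt i.isLt⟩ := by
  obtain ⟨i, hi⟩ := i
  induction i using Nat.strong_induction_on with
  | _ i ih =>
    rcases lt_or_ge i d with hid | hid
    · simp [Nat.mod_eq_of_lt hid]
    · obtain ⟨j, rfl⟩ := Nat.exists_eq_add_of_le' hid
      rw [← hp.2.2 j hi, ih j (by have := hp.1; omega) (by omega)]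
      simp

lemma hasPeriod_iff {α : Word A n} {d : ℕ} :
    HasPeriod α d ↔ 0 < d ∧ d ∣ n ∧ shift d α = α := by
  refine ⟨fun hp => ⟨hp.1, hp.2.1, funext fun i => ?_⟩,
    fun ⟨hd, hdn, h⟩ => ⟨hd, hdn, fun i hi => ?_⟩⟩
  · rw [shift, hp.apply_eq_apply_mod, hp.apply_eq_apply_mod i]
    simp [Nat.mod_mod_of_dvd _ hp.2.1]
  · conv_lhs => rw [← h]
    simp [shift, Nat.mod_eq_of_lt hi]

lemma hasPeriod_mp (α : Word A n) : HasPeriod α (mp α) := by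
  refine Nat.sInf_mem (s := {d | HasPeriod α d}) ?_
  rcases n.eq_zero_or_pos with rfl | hn
  · exact ⟨1, one_pos, one_dvd 0, fun i h => absurd h (by omega)⟩
  · exact ⟨n, hn, dvd_rfl, fun i h => absurd h (by omega)⟩

lemma mp_eq_minimalPeriod (hn : 0 < n) (α : Word A n) :
    mp α = Function.minimalPeriod (shift 1) α := by
  have hper := isPeriodicPt_shift_one_length α
  refine le_antisymm (Nat.sInf_le ?_) ?_
  · exact hasPeriod_iff.2 ⟨hper.minimalPeriod_pos hn, hper.minimalPeriod_dvd,
      isPeriodicPt_shift_one_iff.1 (Function.isPeriodicPt_minimalPeriod _ _)⟩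
  · obtain ⟨hpos, -, hshift⟩ := hasPeriod_iff.1 (hasPeriod_mp α)
    exact (isPeriodicPt_shift_one_iff.2 hshift).minimalPeriod_le hpos

lemma mp_shift (hn : 0 < n) (s : ℕ) (α : Word A n) : mp (shift s α) = mp α := by
  rw [mp_eq_minimalPeriod hn, mp_eq_minimalPeriod hn, ← iterate_shift_one,
    Function.minimalPeriod_apply_iterate
      (Function.mk_mem_periodicPts hn (isPeriodicPt_shift_one_length α))]

lemma primitive_shift (hn : 0 < n) {α : Word A n} (hα : Primitive α) (s : ℕ) :
    Primitive (shift s α) := by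
  rwa [Primitive, mp_shift hn]

end Periods

section Orbits

variable {A : ℕ}

lemma shiftRel_equivalence (n : ℕ) : Equivalence (ShiftRel A n) where
  refl α := ⟨0, .zero, (shift_zero α).symm⟩
  symm := by
    rintro α _ ⟨s, hs, rfl⟩
    refine ⟨s * (n - 1), hs.mul_right _, ?_⟩
    rcases n.eq_zero_or_pos with rfl | hn
    · exact Subsingleton.elim _ _
    · rw [shift_shift, ← Nat.mul_add_one, Nat.sub_add_cancel hn,
        isPeriodicPt_shift_one_iff.1 ((isPeriodicPt_shift_one_length α).const_mul s)]
  trans := by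
    rintro α _ _ ⟨s, hs, rfl⟩ ⟨t, ht, rfl⟩
    exact ⟨t + s, ht.add hs, shift_shift t s α⟩

lemma shiftRel_iff_exists_fin {m : ℕ} (hm : 0 < m) {α β : Word A (2 * m)} :
    ShiftRel A (2 * m) α β ↔ ∃ t : Fin m, β = shift (2 * t) α := by
  constructor
  · rintro ⟨s, ⟨c, rfl⟩, rfl⟩
    refine ⟨⟨c % m, Nat.mod_lt _ hm⟩, ?_⟩
    rw [← iterate_shift_one, ← iterate_shift_one,
      ← (isPeriodicPt_shift_one_length α).iterate_mod_apply, ← two_mul, Nat.mul_mod_mul_left]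
  · rintro ⟨t, rfl⟩
    exact ⟨2 * t, even_two_mul _, rfl⟩

lemma Primitive.shift_ne_self {m : ℕ} {α : Word A (2 * m)} (hα : Primitive α) {s : ℕ}
    (hs : Even s) (hs0 : 0 < s) (hsm : s < 2 * m) : shift s α ≠ α := by
  intro h
  have hdvd : mp α ∣ s := by
    rw [mp_eq_minimalPeriod (by omega)]
    exact (isPeriodicPt_shift_one_iff.2 h).minimalPeriod_dvd
  suffices 2 * m ∣ s from absurd (Nat.le_of_dvd hs0 this) (by omega)
  rcases hα with hmp | ⟨hodd, hmp⟩
  · rwa [hmp] at hdvd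
  · rw [Nat.mul_div_cancel_left _ two_pos] at hodd hmp
    rw [hmp] at hdvd
    exact Nat.Coprime.mul_dvd_of_dvd_of_dvd (Nat.coprime_two_left.2 hodd)
      (even_iff_two_dvd.1 hs) hdvd

lemma Primitive.injective_shift_two_mul {m : ℕ} {α : Word A (2 * m)} (hα : Primitive α) :
    Function.Injective fun t : Fin m => shift (2 * t) α := by
  have hne : ∀ t t' : Fin m, t < t' → shift (2 * t) α ≠ shift (2 * t') α := by
    intro t t' hlt h
    have hlt' : (t : ℕ) < t' := hlt
    refine (primitive_shift (by omega) hα (2 * t)).shift_ne_self (s := 2 * (t' - t))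
      (even_two_mul _) (by omega) (by omega) ?_
    rw [shift_shift, h]
    congr 1
    omega
  intro t t' h
  rcases lt_trichotomy t t' with hlt | rfl | hlt
  · exact absurd h (hne t t' hlt)
  · rfl
  · exact absurd h.symm (hne t' t hlt)

lemma card_eq_card_mul_of_card_fiber {α β : Type*} [Finite α] [Finite β] (f : α → β)
    {m : ℕ} (hf : ∀ b, Nat.card {a // f a = b} = m) : Nat.card α = Nat.card β * m := by
  have := Fintype.ofFinite β
  rw [← Nat.card_congr (Equiv.sigmaFiberEquiv f), Nat.card_sigma]
  simp [hf, Nat.card_eq_fintype_card]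

lemma card_shiftRel_primWord {m : ℕ} (hm : 0 < m) (ρ : PrimWord A (2 * m)) :
    Nat.card {β : PrimWord A (2 * m) // ShiftRel A (2 * m) ρ.1 β.1} = m := by
  refine (Nat.card_eq_of_bijective
    (fun t : Fin m => ⟨⟨shift (2 * t) ρ.1, primitive_shift (by omega) ρ.2 _⟩,
      (shiftRel_iff_exists_fin hm).2 ⟨t, rfl⟩⟩) ⟨?_, ?_⟩).symm.trans (Nat.card_fin m)
  · exact fun t t' h => ρ.2.injective_shift_two_mul (congrArg (fun β => β.1.1) h)
  · rintro ⟨β, hβ⟩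
    obtain ⟨t, ht⟩ := (shiftRel_iff_exists_fin hm).1 hβ
    exact ⟨t, Subtype.ext (Subtype.ext ht.symm)⟩

lemma card_primWord_eq_mul {m : ℕ} (hm : 0 < m) :
    Nat.card (PrimWord A (2 * m)) = Nat.card (GeodClass A (2 * m)) * m := by
  have hr : Equivalence fun α β : PrimWord A (2 * m) => ShiftRel A (2 * m) α.1 β.1 :=
    (shiftRel_equivalence _).comap Subtype.val
  refine card_eq_card_mul_of_card_fiber (Quot.mk _) (Quot.ind fun ρ => ?_)
  refine (Nat.card_congr ?_).trans (card_shiftRel_primWord hm ρ)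
  exact (Equiv.subtypeEquivRight fun β =>
    (hr.quot_mk_eq_iff β ρ).trans ⟨hr.symm, hr.symm⟩)

end Orbits

section Counting

variable {A : ℕ}

lemma ncard_hasPeriod_le {n d : ℕ} (hd : d ≤ n) :
    {α : Word A n | HasPeriod α d}.ncard ≤ A ^ d := by
  calc {α : Word A n | HasPeriod α d}.ncard
      ≤ (Set.univ : Set (Word A d)).ncard := by
        refine Set.ncard_le_ncard_of_injOn (fun α i => α (Fin.castLE hd i))
          (fun _ _ => trivial) fun α hα β hβ h => funext fun i => ?_
        rw [hα.apply_eq_apply_mod, hβ.apply_eq_apply_mod]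
        exact congrFun h ⟨i % d, Nat.mod_lt _ hα.1⟩
    _ = A ^ d := by simp [Set.ncard_univ]

lemma le_of_dvd_two_mul_of_ne {d n : ℕ} (hn : 0 < n) (hdn : d ∣ 2 * n) (hne : d ≠ 2 * n) :
    d ≤ n := by
  obtain ⟨c, hc⟩ := hdn
  rcases c with _ | _ | c
  · simp at hc; omega
  · simp at hc; omega
  · nlinarith

lemma ncard_not_primitive_le {m : ℕ} (hA : 1 ≤ A) (hm : 0 < m) :
    {α : Word A (2 * m) | ¬Primitive α}.ncard ≤ m * A ^ m := by
  have hsub : {α : Word A (2 * m) | ¬Primitive α} ⊆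
      ⋃ d ∈ Finset.Icc 1 m, {α | HasPeriod α d} := by
    intro α hα
    have hp := hasPeriod_mp α
    have hle : mp α ≤ m := le_of_dvd_two_mul_of_ne hm hp.2.1 fun h => hα (Or.inl h)
    exact Set.mem_biUnion (Finset.mem_Icc.2 ⟨hp.1, hle⟩) hp
  calc {α : Word A (2 * m) | ¬Primitive α}.ncard
      ≤ (⋃ d ∈ Finset.Icc 1 m, {α : Word A (2 * m) | HasPeriod α d}).ncard :=
        Set.ncard_le_ncard hsub
    _ ≤ ∑ d ∈ Finset.Icc 1 m, {α : Word A (2 * m) | HasPeriod α d}.ncard :=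
        Finset.set_ncard_biUnion_le _ _
    _ ≤ ∑ _d ∈ Finset.Icc 1 m, A ^ m := Finset.sum_le_sum fun d hd =>
        (ncard_hasPeriod_le (by have := (Finset.mem_Icc.1 hd).2; omega)).trans
          (Nat.pow_le_pow_right hA (Finset.mem_Icc.1 hd).2)
    _ = m * A ^ m := by simp

lemma card_primWord_le (n : ℕ) : Nat.card (PrimWord A n) ≤ A ^ n :=
  (Finite.card_subtype_le _).trans (by simp)

lemma pow_le_card_primWord_add {m : ℕ} (hA : 1 ≤ A) (hm : 0 < m) :
    A ^ (2 * m) ≤ Nat.card (PrimWord A (2 * m)) + m * A ^ m := by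
  calc A ^ (2 * m)
      = {α : Word A (2 * m) | Primitive α}.ncard +
          {α : Word A (2 * m) | ¬Primitive α}.ncard := by
        rw [← Set.compl_ofPred, Set.ncard_add_ncard_compl]
        simp
    _ ≤ Nat.card (PrimWord A (2 * m)) + m * A ^ m :=
        add_le_add (Nat.card_coe_set_eq _).ge (ncard_not_primitive_le hA hm)

lemma abs_card_geodClass_sub_le {m : ℕ} (hA : 1 ≤ A) (hm : 0 < m) :
    |(Nat.card (GeodClass A (2 * m)) : ℝ) - (A : ℝ) ^ (2 * m) / m| ≤ (A : ℝ) ^ m := by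
  have hm' : (0 : ℝ) < m := by exact_mod_cast hm
  have hcard : (Nat.card (GeodClass A (2 * m)) : ℝ) = Nat.card (PrimWord A (2 * m)) / m := by
    rw [card_primWord_eq_mul hm, Nat.cast_mul, mul_div_cancel_right₀ _ hm'.ne']
  have hup : (Nat.card (PrimWord A (2 * m)) : ℝ) ≤ (A : ℝ) ^ (2 * m) := by
    exact_mod_cast card_primWord_le _
  have hlo : (A : ℝ) ^ (2 * m) ≤ Nat.card (PrimWord A (2 * m)) + m * (A : ℝ) ^ m := by
    exact_mod_cast pow_le_card_primWord_add hA hm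
  rw [hcard, ← sub_div, abs_div, abs_of_pos hm', div_le_iff₀ hm', abs_le]
  constructor <;> linarith

lemma card_geodClass_zero : Nat.card (GeodClass A 0) = 0 := by
  have : IsEmpty (GeodClass A 0) := ⟨Quot.ind fun ⟨α, hα⟩ => by
    rcases hα with h | ⟨h, -⟩
    · exact (hasPeriod_mp α).1.ne' h
    · simp at h⟩
  exact Nat.card_of_isEmpty

lemma piA_two_mul (k : ℕ) :
    piA A (2 * k) = ∑ m ∈ Finset.range k, Nat.card (GeodClass A (2 * (m + 1))) := by
  let e : Fin (k + 1) ≃ {n : ℕ // n ≤ 2 * k ∧ Even n} :=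
    Equiv.ofBijective (fun m => ⟨2 * m, by omega, even_two_mul _⟩)
      ⟨fun a b h => Fin.ext (by simpa using h),
        fun ⟨n, hn, r, hr⟩ => ⟨⟨r, by omega⟩, by ext; simp; omega⟩⟩
  calc piA A (2 * k) = ∑ m : Fin (k + 1), Nat.card (GeodClass A (2 * m)) := by
        rw [piA, Geod, ← Nat.card_congr (Equiv.sigmaCongrLeft e), Nat.card_sigma]
        rfl
    _ = ∑ m ∈ Finset.range k, Nat.card (GeodClass A (2 * (m + 1))) := by
        rw [Fin.sum_univ_eq_sum_range (fun m => Nat.card (GeodClass A (2 * m))),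
          Finset.sum_range_succ', mul_zero, card_geodClass_zero, add_zero]

lemma abs_piA_sub_sum_le (hA : 1 ≤ A) (k : ℕ) :
    |(piA A (2 * k) : ℝ) - ∑ m ∈ Finset.range k, ((A : ℝ) ^ 2) ^ (m + 1) / (m + 1)| ≤
      k * (A : ℝ) ^ k := by
  rw [piA_two_mul, Nat.cast_sum, ← Finset.sum_sub_distrib]
  calc _ ≤ ∑ _m ∈ Finset.range k, (A : ℝ) ^ k :=
        (Finset.abs_sum_le_sum_abs _ _).trans (Finset.sum_le_sum fun m hm => ?_)
    _ = k * (A : ℝ) ^ k := by simp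
  have h := abs_card_geodClass_sub_le hA m.succ_pos
  push_cast [← pow_mul] at h ⊢
  exact h.trans (pow_le_pow_right₀ (by exact_mod_cast hA) (Finset.mem_range.1 hm))

end Counting

section Asymptotics

open Finset Topology

lemma tendsto_sum_range_div_sub_mul_pow {y : ℝ} (hy0 : 0 ≤ y) (hy1 : y < 1) :
    Tendsto (fun k : ℕ => ∑ j ∈ range k, (k : ℝ) / (k - j) * y ^ j) atTop
      (𝓝 (1 - y)⁻¹) := by
  let f : ℕ → ℕ → ℝ := fun k j => if j < k then (k : ℝ) / (k - j) * y ^ j else 0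
  have hsum : ∀ k, ∑' j, f k j = ∑ j ∈ range k, (k : ℝ) / (k - j) * y ^ j := fun k => by
    rw [tsum_eq_sum (s := range k) fun j hj => if_neg (by simpa using hj)]
    exact sum_congr rfl fun j hj => if_pos (mem_range.1 hj)
  have hlim : ∀ j, Tendsto (f · j) atTop (𝓝 (y ^ j)) := fun j => by
    have h : Tendsto (fun k : ℕ => (k : ℝ) / (k - j)) atTop (𝓝 1) := by
      simpa [← sub_eq_add_neg] using tendsto_natCast_div_add_atTop (𝕜 := ℝ) (-(j : ℝ))
    refine (by simpa using h.mul_const (y ^ j) : Tendsto _ _ (𝓝 (y ^ j))).congr' ?_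
    filter_upwards [eventually_gt_atTop j] with k hk
    simp [f, hk]
  have hbound : ∀ k j, ‖f k j‖ ≤ (j + 1) * y ^ j := fun k j => by
    by_cases hjk : j < k
    · have hkj : (0 : ℝ) < k - j := sub_pos.2 (by exact_mod_cast hjk)
      have hjk' : (j : ℝ) + 1 ≤ k := by exact_mod_cast hjk
      have hratio : (k : ℝ) / (k - j) ≤ j + 1 := by
        rw [div_le_iff₀ hkj]
        nlinarith
      simp only [f, if_pos hjk, norm_mul, Real.norm_eq_abs, abs_of_nonneg hkj.le,
        abs_of_nonneg (pow_nonneg hy0 j), abs_div, Nat.abs_cast]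
      exact mul_le_mul_of_nonneg_right hratio (pow_nonneg hy0 j)
    · simp only [f, if_neg hjk, norm_zero]
      positivity
  have hsummable : Summable fun j : ℕ => ((j : ℝ) + 1) * y ^ j := by
    have hy : ‖y‖ < 1 := by rwa [Real.norm_eq_abs, abs_of_nonneg hy0]
    simpa [add_mul] using (summable_pow_mul_geometric_of_norm_lt_one 1 hy).add
      (summable_geometric_of_lt_one hy0 hy1)
  have h := tendsto_tsum_of_dominated_convergence hsummable hlim (.of_forall hbound)
  rw [tsum_geometric_of_lt_one hy0 hy1] at h
  exact h.congr hsum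

lemma tendsto_mul_sum_range_pow_div {x : ℝ} (hx : 1 < x) :
    Tendsto (fun k : ℕ => (k : ℝ) / x ^ k * ∑ m ∈ range k, x ^ (m + 1) / (m + 1)) atTop
      (𝓝 (x / (x - 1))) := by
  have hx0 : 0 < x := zero_lt_one.trans hx
  have h := tendsto_sum_range_div_sub_mul_pow (inv_nonneg.2 hx0.le) (inv_lt_one_of_one_lt₀ hx)
  rw [show (1 - x⁻¹)⁻¹ = x / (x - 1) by field_simp] at h
  refine h.congr fun k => ?_
  rw [mul_sum, ← sum_range_reflect]
  refine sum_congr rfl fun j hj => ?_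
  have hjk := mem_range.1 hj
  have hcast : (k : ℝ) - (k - 1 - j : ℕ) = j + 1 := by
    rw [sub_eq_iff_eq_add]
    exact_mod_cast (by omega : k = j + 1 + (k - 1 - j))
  have hpow : x ^ k = x ^ (j + 1) * x ^ (k - 1 - j) := by
    rw [← pow_add]
    congr 1
    omega
  rw [hcast, hpow, inv_pow]
  field_simp

end Asymptotics

lemma tendsto_piA_mul_div_pow {A : ℕ} (hA : 1 < A) :
    Tendsto (fun k : ℕ => (piA A (2 * k) : ℝ) * k / (A : ℝ) ^ (2 * k)) atTop
      (nhds ((A : ℝ) ^ 2 / ((A : ℝ) ^ 2 - 1))) := by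
  have hA' : (1 : ℝ) < A := by exact_mod_cast hA
  let S : ℕ → ℝ := fun k => ∑ m ∈ Finset.range k, ((A : ℝ) ^ 2) ^ (m + 1) / (m + 1)
  have hS := tendsto_mul_sum_range_pow_div (one_lt_pow₀ hA' two_ne_zero)
  have herr : Tendsto (fun k : ℕ => (k : ℝ) ^ 2 * (A : ℝ)⁻¹ ^ k) atTop (nhds 0) :=
    tendsto_pow_const_mul_const_pow_of_abs_lt_one 2
      (by rw [abs_inv, abs_of_pos (zero_lt_one.trans hA')]; exact inv_lt_one_of_one_lt₀ hA')
  have hdiff : Tendsto (fun k : ℕ => (piA A (2 * k) : ℝ) * k / (A : ℝ) ^ (2 * k) -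
      k / ((A : ℝ) ^ 2) ^ k * S k) atTop (nhds 0) := by
    refine squeeze_zero_norm (fun k => ?_) herr
    have hfactor : (piA A (2 * k) : ℝ) * k / (A : ℝ) ^ (2 * k) - k / ((A : ℝ) ^ 2) ^ k * S k =
        k / ((A : ℝ) ^ k) ^ 2 * ((piA A (2 * k) : ℝ) - S k) := by
      ring
    calc ‖(piA A (2 * k) : ℝ) * k / (A : ℝ) ^ (2 * k) - k / ((A : ℝ) ^ 2) ^ k * S k‖
        = k / ((A : ℝ) ^ k) ^ 2 * |(piA A (2 * k) : ℝ) - S k| := by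
          rw [Real.norm_eq_abs, hfactor, abs_mul, abs_of_nonneg (by positivity)]
      _ ≤ k / ((A : ℝ) ^ k) ^ 2 * (k * (A : ℝ) ^ k) :=
          mul_le_mul_of_nonneg_left (abs_piA_sub_sum_le hA.le k) (by positivity)
      _ = (k : ℝ) ^ 2 * (A : ℝ)⁻¹ ^ k := by
          rw [inv_pow]
          field_simp
  simpa [S] using hS.add hdiff

theorem stmt9 (A : ℕ) (hA : 1 < A) :
    Tendsto
      (fun k : ℕ =>
        (piA A (2 * k) : ℝ) /
          (2 * (A : ℝ) ^ 2 / ((A : ℝ) ^ 2 - 1) * (A : ℝ) ^ (2 * k) / ((2 * k : ℕ) : ℝ)))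
      atTop (nhds 1) := by
  have hA2 : (0 : ℝ) < (A : ℝ) ^ 2 - 1 :=
    sub_pos.2 (one_lt_pow₀ (by exact_mod_cast hA) two_ne_zero)
  have hc : (A : ℝ) ^ 2 / ((A : ℝ) ^ 2 - 1) ≠ 0 := by positivity
  rw [← div_self hc]
  refine ((tendsto_piA_mul_div_pow hA).div_const _).congr' ?_
  filter_upwards [eventually_ne_atTop 0] with k hk
  field_simp
  push_cast
  ring

end Winding
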